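/- If r ∈ H^{1,1}(ℝ) (i.e., r, r', and x·r(x) all lie in L²(ℝ)) and t > 0, then the modified reflection coefficient r̃(z,t) := r(Re z)·exp(−2izt/(4z²−μ²)) restricted to the upper semicircle {z = μ/2 + κe^{iα} : ε ≤ α ≤ π−ε} satisfies the pointwise bound |r̃(z,t)| ≤ |r(Re z)| e^{−t sin(ε)/(4κ)}, and in particular r̃(·,t) tends to 0 uniformly on such arcs as κ → 0⁺. -/

import Mathlib

/-!
Partial fractions give `2z/(z² - a²) = (z - a)⁻¹ + (z + a)⁻¹` with `a = μ/2`, and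
`Re (-i·s) = Im s`. On the upper half plane `Im (z + a)⁻¹ ≤ 0`, while on the arc
`Im (z - a)⁻¹ = -κ sin α / κ² = -sin α / κ`; finally `sin α ≥ sin ε` for `α ∈ [ε, π - ε]`.
-/

open Complex Real MeasureTheory

theorem Real.sin_le_sin_of_le_of_le_pi_sub {ε α : ℝ} (hε : -(π / 2) ≤ ε) (hα₁ : ε ≤ α)
    (hα₂ : α ≤ π - ε) : Real.sin ε ≤ Real.sin α := by
  rcases le_or_gt α (π / 2) with h | h
  · exact Real.sin_le_sin_of_le_of_le_pi_div_two hε h hα₁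
  · rw [← Real.sin_pi_sub α]
    exact Real.sin_le_sin_of_le_of_le_pi_div_two hε (by linarith) (by linarith)

namespace Complex

theorem two_mul_div_sq_sub_sq {z a : ℂ} (h₁ : z - a ≠ 0) (h₂ : z + a ≠ 0) :
    2 * z / (z ^ 2 - a ^ 2) = (z - a)⁻¹ + (z + a)⁻¹ := by
  rw [show z ^ 2 - a ^ 2 = (z - a) * (z + a) by ring]
  field_simp
  ring

theorem im_inv_nonpos {w : ℂ} (hw : 0 ≤ w.im) : w⁻¹.im ≤ 0 := by
  rw [inv_im]
  exact div_nonpos_of_nonpos_of_nonneg (neg_nonpos.2 hw) (normSq_nonneg w)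

theorem re_neg_two_mul_I_mul_div_sq_sub_sq_le {μ t : ℝ} (ht : 0 ≤ t) {z : ℂ} (hz : 0 < z.im) :
    (-2 * I * z * t / (4 * z ^ 2 - (μ : ℂ) ^ 2)).re ≤
      -t * z.im / (4 * normSq (z - (μ : ℂ) / 2)) := by
  set a : ℂ := (μ : ℂ) / 2
  have ha : a.im = 0 := by simp [a]
  have h₁ : z - a ≠ 0 := fun h ↦ by simpa [ha, hz.ne'] using congrArg im h
  have h₂ : z + a ≠ 0 := fun h ↦ by simpa [ha, hz.ne'] using congrArg im h
  have hsplit : -2 * I * z * t / (4 * z ^ 2 - (μ : ℂ) ^ 2) =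
      -I * (t / 4 : ℝ) * ((z - a)⁻¹ + (z + a)⁻¹) := by
    rw [← two_mul_div_sq_sub_sq h₁ h₂, show (μ : ℂ) ^ 2 = 4 * a ^ 2 by ring]
    push_cast
    field_simp
  have hre : (-2 * I * z * t / (4 * z ^ 2 - (μ : ℂ) ^ 2)).re =
      t / 4 * ((z - a)⁻¹.im + (z + a)⁻¹.im) := by
    rw [hsplit]
    simp
  have hplus : (z + a)⁻¹.im ≤ 0 := im_inv_nonpos (by simp [ha, hz.le])
  have hminus : (z - a)⁻¹.im = -z.im / normSq (z - a) := by simp [inv_im, ha]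
  rw [hre, hminus]
  calc t / 4 * (-z.im / normSq (z - a) + (z + a)⁻¹.im)
      ≤ t / 4 * (-z.im / normSq (z - a)) := by gcongr; linarith
    _ = -t * z.im / (4 * normSq (z - a)) := by ring

theorem im_add_ofReal_mul_exp {w : ℂ} (hw : w.im = 0) (κ α : ℝ) :
    (w + κ * exp (I * α)).im = κ * Real.sin α := by
  rw [mul_comm I, add_im, mul_im, exp_ofReal_mul_I_re, exp_ofReal_mul_I_im, hw]
  simp

theorem normSq_ofReal_mul_exp_I_mul (κ α : ℝ) : normSq (κ * exp (I * α)) = κ ^ 2 := by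
  rw [map_mul, normSq_ofReal, mul_comm I, normSq_eq_norm_sq, norm_exp_ofReal_mul_I]
  ring

end Complex

theorem stmt_3_general (μ ε t : ℝ) (hε0 : 0 < ε)
    (ht : 0 < t)
    (r : ℝ → ℂ)
    (κ α : ℝ) (hκ0 : 0 < κ) (hα1 : ε ≤ α) (hα2 : α ≤ π - ε)
    (z : ℂ) (hz : z = (μ : ℂ) / 2 + (κ : ℂ) * Complex.exp (Complex.I * α)) :
    ‖r z.re * Complex.exp (-2 * Complex.I * z * (t : ℂ) /
        (4 * z ^ 2 - (μ : ℂ) ^ 2))‖ ≤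
      ‖r z.re‖ * Real.exp (-t * Real.sin ε / (4 * κ)) := by
  have hsin : Real.sin ε ≤ Real.sin α :=
    Real.sin_le_sin_of_le_of_le_pi_sub (by linarith) hα1 hα2
  have hsinα : 0 < Real.sin α := Real.sin_pos_of_pos_of_lt_pi (by linarith) (by linarith)
  have him : z.im = κ * Real.sin α := by rw [hz, im_add_ofReal_mul_exp (by simp)]
  have hnormSq : normSq (z - (μ : ℂ) / 2) = κ ^ 2 := by
    rw [hz, add_sub_cancel_left, normSq_ofReal_mul_exp_I_mul]
  have hphase := re_neg_two_mul_I_mul_div_sq_sub_sq_le (μ := μ) ht.le (z := z)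
    (by rw [him]; positivity)
  rw [him, hnormSq] at hphase
  rw [norm_mul, norm_exp]
  gcongr
  calc _ ≤ -t * (κ * Real.sin α) / (4 * κ ^ 2) := hphase
    _ = -t * Real.sin α / (4 * κ) := by field_simp
    _ ≤ -t * Real.sin ε / (4 * κ) := by
      simp only [neg_mul, neg_div, neg_le_neg_iff]
      gcongr

theorem stmt_3 (μ ε t : ℝ) (hμ0 : 0 < μ) (hμ1 : μ ≤ 1) (hε0 : 0 < ε) (hε : ε < π / 2)
    (ht : 0 < t)
    (r : ℝ → ℂ)
    (hr : MemLp r 2 (volume : Measure ℝ))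
    (hr' : MemLp (deriv r) 2 (volume : Measure ℝ))
    (hrx : MemLp (fun x : ℝ => (x : ℂ) * r x) 2 (volume : Measure ℝ))
    (κ α : ℝ) (hκ0 : 0 < κ) (hκμ : κ < μ) (hα1 : ε ≤ α) (hα2 : α ≤ π - ε)
    (z : ℂ) (hz : z = (μ : ℂ) / 2 + (κ : ℂ) * Complex.exp (Complex.I * α)) :
    ‖r z.re * Complex.exp (-2 * Complex.I * z * (t : ℂ) /
        (4 * z ^ 2 - (μ : ℂ) ^ 2))‖ ≤
      ‖r z.re‖ * Real.exp (-t * Real.sin ε / (4 * κ)) :=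
  stmt_3_general μ ε t hε0 ht r κ α hκ0 hα1 hα2 z hz
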